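/- Weak stable equivalence of flabby classes is transitive (and hence an equivalence relation). Precisely: let G, G′, G″ be finite groups and let M, M′, M″ be lattices over G, G′, G″ with flabby quotients F, F′, F″ respectively. Suppose there is a subdirect product H̃ ≤ G × G′ such that the inflations of F and F′ to H̃ are similar H̃-lattices, and a subdirect product H̃′ ≤ G′ × G″ such that the inflations of F′ and F″ to H̃′ are similar H̃′-lattices. Then there exists a subdirect product H̃″ ≤ G × G″ such that the inflations of F and F″ to H̃″ are similar H̃″-lattices. -/

import Mathlib

/- In this file, a `G`-lattice is encoded as a `Representation ℤ G M` on a ℤ-module `M`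
which is finite and free over `ℤ` (typeclass assumptions `Module.Free ℤ M`,
`Module.Finite ℤ M`). -/

attribute [instance 2000] Prod.instModule Pi.module

/-- The direct sum of two representations of a group `G` over `R`. -/
def prodRep {R G M N : Type} [CommRing R] [Group G]
    [AddCommGroup M] [Module R M] [AddCommGroup N] [Module R N]
    (ρ : Representation R G M) (τ : Representation R G N) :
    Representation R G (M × N) where
  toFun g := LinearMap.prodMap (ρ g) (τ g)
  map_one' := LinearMap.ext fun x => by simp
  map_mul' g h := LinearMap.ext fun x => by simp

/-- Inflation (or restriction) of a representation along a group homomorphism. -/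
def inflRep {R H G M : Type} [CommRing R] [Group H] [Group G]
    [AddCommGroup M] [Module R M]
    (ρ : Representation R G M) (φ : H →* G) : Representation R H M :=
  MonoidHom.comp ρ φ

/-- A permutation lattice: the module has a finite basis permuted by the group action. -/
def IsPermutationRep {R G M : Type} [CommRing R] [Group G] [AddCommGroup M] [Module R M]
    (ρ : Representation R G M) : Prop :=
  ∃ (ι : Type) (_ : Fintype ι) (b : Module.Basis ι R M),
    ∀ (g : G) (i : ι), ∃ j : ι, ρ g (b i) = b j

/-- An equivariant isomorphism between two representations. -/
def RepIso {R G M N : Type} [CommRing R] [Group G] [AddCommGroup M] [Module R M]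
    [AddCommGroup N] [Module R N]
    (ρ : Representation R G M) (τ : Representation R G N) : Prop :=
  ∃ e : M ≃ₗ[R] N, ∀ (g : G) (m : M), e (ρ g m) = τ g (e m)

/-- Flabbiness: the Tate cohomology group `Ĥ⁻¹(H, M)` vanishes for every subgroup `H ≤ G`,
i.e. every element of `M` killed by the norm element of `H` lies in the subgroup
generated by the elements `h • m' - m'` (`h ∈ H`, `m' ∈ M`). -/
def IsFlabbyRep {G M : Type} [Group G] [AddCommGroup M] [Module ℤ M]
    (ρ : Representation ℤ G M) : Prop :=
  ∀ (H : Subgroup G) (m : M),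
    (∑ᶠ h : H, ρ (h : G) m) = 0 →
      m ∈ AddSubgroup.closure {x : M | ∃ (h : H) (m' : M), x = ρ ((h : G)) m' - m'}

/-- Coflabbiness: `H¹(H, M) = 0` for every subgroup `H ≤ G`, i.e. every `1`-cocycle on `H`
with values in `M` is a coboundary. -/
def IsCoflabbyRep {G M : Type} [Group G] [AddCommGroup M] [Module ℤ M]
    (ρ : Representation ℤ G M) : Prop :=
  ∀ (H : Subgroup G) (f : H → M),
    (∀ h₁ h₂ : H, f (h₁ * h₂) = ρ ((h₁ : G)) (f h₂) + f h₁) →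
    ∃ m : M, ∀ x : H, f x = ρ ((x : G)) m - m

/-- Stably permutation: the lattice becomes permutation after adding a permutation lattice. -/
def IsStablyPermutationRep {G M : Type} [Group G] [AddCommGroup M] [Module ℤ M]
    (ρ : Representation ℤ G M) : Prop :=
  ∃ (Q : Type) (_ : AddCommGroup Q) (_ : Module ℤ Q) (σ : Representation ℤ G Q)
    (Q' : Type) (_ : AddCommGroup Q') (_ : Module ℤ Q') (σ' : Representation ℤ G Q'),
    IsPermutationRep σ ∧ IsPermutationRep σ' ∧ RepIso (prodRep ρ σ) σ'

/-- Invertible: the lattice is a direct summand of a permutation lattice. -/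
def IsInvertibleRep {G M : Type} [Group G] [AddCommGroup M] [Module ℤ M]
    (ρ : Representation ℤ G M) : Prop :=
  ∃ (N : Type) (_ : AddCommGroup N) (_ : Module ℤ N) (τ : Representation ℤ G N),
    IsPermutationRep (prodRep ρ τ)

/-- Similarity of lattices: they become isomorphic after adding permutation lattices. -/
def SimilarRep {G M N : Type} [Group G] [AddCommGroup M] [Module ℤ M]
    [AddCommGroup N] [Module ℤ N]
    (ρ : Representation ℤ G M) (τ : Representation ℤ G N) : Prop :=
  ∃ (Q : Type) (_ : AddCommGroup Q) (_ : Module ℤ Q) (σ : Representation ℤ G Q)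
    (Q' : Type) (_ : AddCommGroup Q') (_ : Module ℤ Q') (σ' : Representation ℤ G Q'),
    IsPermutationRep σ ∧ IsPermutationRep σ' ∧ RepIso (prodRep ρ σ) (prodRep τ σ')

/-- A short exact sequence `0 → M → P → F → 0` of `G`-equivariant `ℤ`-linear maps. -/
def IsEquivariantExact {G M P F : Type} [Group G] [AddCommGroup M] [Module ℤ M]
    [AddCommGroup P] [Module ℤ P] [AddCommGroup F] [Module ℤ F]
    (ρM : Representation ℤ G M) (ρP : Representation ℤ G P) (ρF : Representation ℤ G F)
    (i : M →ₗ[ℤ] P) (π : P →ₗ[ℤ] F) : Prop :=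
  Function.Injective i ∧ Function.Surjective π ∧ LinearMap.range i = LinearMap.ker π ∧
  (∀ (g : G) (m : M), i (ρM g m) = ρP g (i m)) ∧
  (∀ (g : G) (x : P), π (ρP g x) = ρF g (π x))

/-- A flabby resolution `0 → M → P → F → 0`: exact and equivariant, `P` a permutation
lattice and `F` flabby. -/
def IsFlabbyResolution {G M P F : Type} [Group G] [AddCommGroup M] [Module ℤ M]
    [AddCommGroup P] [Module ℤ P] [AddCommGroup F] [Module ℤ F]
    (ρM : Representation ℤ G M) (ρP : Representation ℤ G P) (ρF : Representation ℤ G F)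
    (i : M →ₗ[ℤ] P) (π : P →ₗ[ℤ] F) : Prop :=
  IsEquivariantExact ρM ρP ρF i π ∧ IsPermutationRep ρP ∧ IsFlabbyRep ρF

/-- `F` is a flabby quotient of `M`, i.e. it fits into some flabby resolution of `M`;
it then represents the flabby class `[M]^fl`. -/
def IsFlabbyQuotient {G M F : Type} [Group G] [AddCommGroup M] [Module ℤ M]
    [AddCommGroup F] [Module ℤ F]
    (ρM : Representation ℤ G M) (ρF : Representation ℤ G F) : Prop :=
  ∃ (P : Type) (_ : AddCommGroup P) (_ : Module ℤ P)
    (ρP : Representation ℤ G P) (i : M →ₗ[ℤ] P) (π : P →ₗ[ℤ] F),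
    IsFlabbyResolution ρM ρP ρF i π

/-- First projection of a subgroup of `G × G'` (surjective when the subgroup
is a subdirect product). -/
def projFst {G G' : Type} [Group G] [Group G'] (W : Subgroup (G × G')) : ↥W →* G :=
  (MonoidHom.fst G G').comp W.subtype

/-- Second projection of a subgroup of `G × G'`. -/
def projSnd {G G' : Type} [Group G] [Group G'] (W : Subgroup (G × G')) : ↥W →* G' :=
  (MonoidHom.snd G G').comp W.subtype

/-
Let `W = W₁ ×_{G'} W₂` be the fibre product over `G'`; it surjects onto the composite
`W₃ = {(g, g'') | ∃ g', (g, g') ∈ W₁ ∧ (g', g'') ∈ W₂} ≤ G × G''`, which is again a subdirect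
product. Inflated to `W`, the two similarities compose to `F ∼ F''`. This similarity descends
along `W ↠ W₃`: if `K` is the kernel, taking `K`-invariants of `F ⊕ P ≅ F'' ⊕ P'` leaves `F` and
`F''` alone, since `K` acts trivially on them, and the `K`-invariants of a permutation lattice
form a permutation lattice for `W ⧸ K`, with the `K`-orbit sums of the permuted basis as a basis.
-/

open MulAction Representation

section RepIso

-- Module instances are implicit, not instance-implicit: over `ℤ`, instance search on a
-- submodule would find `AddCommGroup.toIntModule` instead of the submodule's own structure.
variable {R G A B C D : Type} [CommRing R] [Group G] [AddCommGroup A] {_ : Module R A}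
  [AddCommGroup B] {_ : Module R B} [AddCommGroup C] {_ : Module R C}
  [AddCommGroup D] {_ : Module R D}
  {α : Representation R G A} {β : Representation R G B} {γ : Representation R G C}
  {δ : Representation R G D}

@[simp]
lemma prodRep_apply (α : Representation R G A) (β : Representation R G B) (g : G) (m : A × B) :
    prodRep α β g m = (α g m.1, β g m.2) := rfl

lemma RepIso.refl (α : Representation R G A) : RepIso α α :=
  ⟨LinearEquiv.refl R A, fun _ _ => rfl⟩

lemma RepIso.symm (h : RepIso α β) : RepIso β α := by
  obtain ⟨e, he⟩ := h
  exact ⟨e.symm, fun g m => e.injective (by rw [he, e.apply_symm_apply, e.apply_symm_apply])⟩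

lemma RepIso.trans (h₁ : RepIso α β) (h₂ : RepIso β γ) : RepIso α γ := by
  obtain ⟨e, he⟩ := h₁
  obtain ⟨f, hf⟩ := h₂
  exact ⟨e.trans f, fun g m => by simp only [LinearEquiv.trans_apply, he, hf]⟩

lemma RepIso.prod (h₁ : RepIso α γ) (h₂ : RepIso β δ) :
    RepIso (prodRep α β) (prodRep γ δ) := by
  obtain ⟨e, he⟩ := h₁
  obtain ⟨f, hf⟩ := h₂
  exact ⟨e.prodCongr f, fun g m => Prod.ext (he g m.1) (hf g m.2)⟩

lemma repIso_prodRep_comm (α : Representation R G A) (β : Representation R G B) :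
    RepIso (prodRep α β) (prodRep β α) :=
  ⟨LinearEquiv.prodComm R A B, fun _ _ => rfl⟩

lemma repIso_prodRep_assoc (α : Representation R G A) (β : Representation R G B)
    (γ : Representation R G C) :
    RepIso (prodRep (prodRep α β) γ) (prodRep α (prodRep β γ)) :=
  ⟨LinearEquiv.prodAssoc R A B C, fun _ _ => rfl⟩

end RepIso

section Permutation

variable {R G H A B : Type} [CommRing R] [Group G] [Group H] [AddCommGroup A] {_ : Module R A}
  [AddCommGroup B] {_ : Module R B} {α : Representation R G A} {β : Representation R G B}

lemma IsPermutationRep.prod (hα : IsPermutationRep α) (hβ : IsPermutationRep β) :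
    IsPermutationRep (prodRep α β) := by
  obtain ⟨ι, _, b, hb⟩ := hα
  obtain ⟨κ, _, c, hc⟩ := hβ
  refine ⟨ι ⊕ κ, inferInstance, b.prod c, fun g => ?_⟩
  rintro (i | k)
  · obtain ⟨j, hj⟩ := hb g i
    exact ⟨Sum.inl j, by simpa using hj⟩
  · obtain ⟨l, hl⟩ := hc g k
    exact ⟨Sum.inr l, by simpa using hl⟩

lemma IsPermutationRep.infl (hα : IsPermutationRep α) (φ : H →* G) :
    IsPermutationRep (inflRep α φ) := by
  obtain ⟨ι, _, b, hb⟩ := hα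
  exact ⟨ι, inferInstance, b, fun h i => hb (φ h) i⟩

end Permutation

section Orbits

variable {ι : Type}

lemma LinearMap.mem_range_funLeft_orbitRel_iff {R K : Type} [CommRing R] [Group K]
    [MulAction K ι] (f : ι → R) :
    f ∈ LinearMap.range (LinearMap.funLeft R R (Quotient.mk (orbitRel K ι))) ↔
      ∀ (k : K) (i : ι), f (k • i) = f i := by
  constructor
  · rintro ⟨F, rfl⟩ k i
    exact congrArg F (Quotient.sound (mem_orbit i k))
  · intro hf
    refine ⟨Quotient.lift f ?_, rfl⟩
    rintro i j ⟨k, rfl⟩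
    exact hf k j

lemma MulAction.orbitRel_smul_smul_iff {H : Type} [Group H] [MulAction H ι] (K : Subgroup H)
    [K.Normal] (h : H) (i j : ι) : orbitRel K ι (h • i) (h • j) ↔ orbitRel K ι i j := by
  suffices ∀ (h : H) (i j : ι), orbitRel K ι i j → orbitRel K ι (h • i) (h • j) from
    ⟨fun hij => by simpa using this h⁻¹ _ _ hij, this h i j⟩
  rintro h i j ⟨k, rfl⟩
  refine ⟨⟨h * k * h⁻¹, ‹K.Normal›.conj_mem k k.2 h⟩, ?_⟩
  simp [Subgroup.smul_def, mul_smul]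

end Orbits

section PermutationBasis

variable {R H ι Q : Type} [CommRing R] [Group H] [MulAction H ι] [Fintype ι]
  [AddCommGroup Q] [Module R Q] {σ : Representation R H Q} {b : Module.Basis ι R Q}

lemma Representation.apply_basis_equivFun_symm (hb : ∀ g i, σ g (b i) = b (g • i)) (g : H)
    (f : ι → R) : σ g (b.equivFun.symm f) = b.equivFun.symm (fun i => f (g⁻¹ • i)) := by
  simp only [Module.Basis.equivFun_symm_apply, map_sum, map_smul, hb]
  exact Fintype.sum_equiv (MulAction.toPerm g) _ _ (fun i => by simp)

lemma Representation.map_basis_equivFun_invariants (hb : ∀ g i, σ g (b i) = b (g • i))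
    (K : Subgroup H) :
    (invariants (σ.comp K.subtype)).map (b.equivFun : Q →ₗ[R] ι → R) =
      LinearMap.range (LinearMap.funLeft R R (Quotient.mk (orbitRel K ι))) := by
  ext f
  rw [Submodule.mem_map_equiv, mem_invariants, LinearMap.mem_range_funLeft_orbitRel_iff]
  simp only [MonoidHom.comp_apply, Subgroup.coe_subtype, apply_basis_equivFun_symm hb,
    b.equivFun.symm.injective.eq_iff, funext_iff]
  exact ⟨fun hf k i => by simpa [Subgroup.smul_def] using hf k⁻¹ i,
    fun hf k i => by simpa [Subgroup.smul_def] using hf k⁻¹ i⟩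

/-- The basis of orbit sums `∑_{i ∈ o} b i`, one for each `K`-orbit `o` on `ι`. -/
noncomputable def Representation.orbitSumBasis (hb : ∀ g i, σ g (b i) = b (g • i))
    (K : Subgroup H) :
    Module.Basis (orbitRel.Quotient K ι) R (invariants (σ.comp K.subtype)) :=
  (Pi.basisFun R _).map <|
    (LinearEquiv.ofInjective _ (LinearMap.funLeft_injective_of_surjective R R _
      Quotient.mk_surjective)).trans
    (LinearEquiv.ofSubmodules b.equivFun _ _ (map_basis_equivFun_invariants hb K)).symm

lemma Representation.coe_orbitSumBasis (hb : ∀ g i, σ g (b i) = b (g • i))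
    (K : Subgroup H) [DecidableEq (orbitRel.Quotient K ι)] (o : orbitRel.Quotient K ι) :
    (orbitSumBasis hb K o : Q) =
      b.equivFun.symm (fun i => if Quotient.mk _ i = o then 1 else 0) := by
  simp [orbitSumBasis, LinearEquiv.ofSubmodules_symm_apply, Pi.single_apply]

lemma Representation.apply_orbitSumBasis (hb : ∀ g i, σ g (b i) = b (g • i))
    (K : Subgroup H) [K.Normal] (h : H) (i : ι) :
    σ h (orbitSumBasis hb K (Quotient.mk _ i)) = orbitSumBasis hb K (Quotient.mk _ (h • i)) := by
  classical
  rw [coe_orbitSumBasis, coe_orbitSumBasis, apply_basis_equivFun_symm hb]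
  congr 1
  funext j
  refine if_congr ?_ rfl rfl
  rw [Quotient.eq, Quotient.eq, ← orbitRel_smul_smul_iff K h, smul_inv_smul]

end PermutationBasis

section PermutationDescent

variable {R H Q : Type} [CommRing R] [Nontrivial R] [Group H] [AddCommGroup Q] [Module R Q]
  {σ : Representation R H Q}

lemma IsPermutationRep.exists_mulAction (hσ : IsPermutationRep σ) :
    ∃ (ι : Type) (_ : Fintype ι) (_ : MulAction H ι) (b : Module.Basis ι R Q),
      ∀ g i, σ g (b i) = b (g • i) := by
  obtain ⟨ι, _, b, hb⟩ := hσ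
  choose act hact using hb
  let _ : MulAction H ι :=
    { smul := act
      one_smul := fun i => b.injective <| (hact 1 i).symm.trans (by rw [map_one]; rfl)
      mul_smul := fun g h i => b.injective <| (hact (g * h) i).symm.trans
        (by rw [map_mul, Module.End.mul_apply, hact, hact]; rfl) }
  exact ⟨ι, inferInstance, inferInstance, b, hact⟩

lemma IsPermutationRep.quotientToInvariants (hσ : IsPermutationRep σ) (K : Subgroup H)
    [K.Normal] : IsPermutationRep (σ.quotientToInvariants K) := by
  obtain ⟨ι, _, _, b, hb⟩ := hσ.exists_mulAction
  refine ⟨_, Fintype.ofFinite _, orbitSumBasis hb K, fun γ o => ?_⟩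
  induction γ using QuotientGroup.induction_on with | H h => ?_
  induction o using Quotient.inductionOn with | h i => ?_
  exact ⟨_, Subtype.ext (apply_orbitSumBasis hb K h i)⟩

end PermutationDescent

section InvariantsIso

variable {R H A B : Type} [CommRing R] [Group H] [AddCommGroup A] {_ : Module R A}
  [AddCommGroup B] {_ : Module R B} (K : Subgroup H) [K.Normal]

lemma RepIso.quotientToInvariants {α : Representation R H A} {β : Representation R H B}
    (h : RepIso α β) : RepIso (α.quotientToInvariants K) (β.quotientToInvariants K) := by
  obtain ⟨e, he⟩ := h
  have hmap : (invariants (α.comp K.subtype)).map (e : A →ₗ[R] B) =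
      invariants (β.comp K.subtype) := by
    ext y
    simp only [Submodule.mem_map_equiv, mem_invariants, MonoidHom.comp_apply,
      Subgroup.coe_subtype]
    exact forall_congr' fun k => by rw [← e.injective.eq_iff, he, e.apply_symm_apply]
  refine ⟨LinearEquiv.ofSubmodules e _ _ hmap, fun γ m => ?_⟩
  induction γ using QuotientGroup.induction_on with | H h => ?_
  exact Subtype.ext (he h m)

lemma repIso_quotientToInvariants_prodRep (α : Representation R H A)
    (β : Representation R H B) :
    RepIso ((prodRep α β).quotientToInvariants K)
      (prodRep (α.quotientToInvariants K) (β.quotientToInvariants K)) := by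
  refine ⟨
    { toFun := fun m => (⟨m.1.1, fun k => congrArg Prod.fst (m.2 k)⟩,
        ⟨m.1.2, fun k => congrArg Prod.snd (m.2 k)⟩)
      invFun := fun m => ⟨(m.1, m.2), fun k => Prod.ext (m.1.2 k) (m.2.2 k)⟩
      map_add' := fun _ _ => rfl
      map_smul' := fun _ _ => rfl
      left_inv := fun _ => rfl
      right_inv := fun _ => rfl }, fun γ m => ?_⟩
  induction γ using QuotientGroup.induction_on with | H h => ?_
  rfl

lemma repIso_quotientToInvariants_inflRep (α : Representation R (H ⧸ K) A) :
    RepIso ((inflRep α (QuotientGroup.mk' K)).quotientToInvariants K) α := by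
  have htop : invariants ((inflRep α (QuotientGroup.mk' K)).comp K.subtype) = ⊤ := by
    ext a
    simp only [Submodule.mem_top, iff_true, mem_invariants]
    intro k
    simp [inflRep, (QuotientGroup.eq_one_iff _).mpr k.2]
  refine ⟨LinearEquiv.ofTop _ htop, fun γ m => ?_⟩
  induction γ using QuotientGroup.induction_on with | H h => ?_
  rfl

end InvariantsIso

section Similar

variable {G H A B C : Type} [Group G] [Group H] [AddCommGroup A] {_ : Module ℤ A}
  [AddCommGroup B] {_ : Module ℤ B} [AddCommGroup C] {_ : Module ℤ C}
  {α : Representation ℤ G A} {β : Representation ℤ G B} {γ : Representation ℤ G C}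

lemma SimilarRep.infl (h : SimilarRep α β) (φ : H →* G) :
    SimilarRep (inflRep α φ) (inflRep β φ) := by
  obtain ⟨Q, _, _, σ, Q', _, _, σ', hσ, hσ', e, he⟩ := h
  exact ⟨Q, _, _, inflRep σ φ, Q', _, _, inflRep σ' φ, hσ.infl φ,
    hσ'.infl φ, e, fun x m => he (φ x) m⟩

lemma SimilarRep.trans (h₁ : SimilarRep α β) (h₂ : SimilarRep β γ) : SimilarRep α γ := by
  obtain ⟨Q, _, _, σ, Q', _, _, σ', hσ, hσ', e⟩ := h₁
  obtain ⟨P, _, _, τ, P', _, _, τ', hτ, hτ', f⟩ := h₂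
  refine ⟨Q × P, _, _, prodRep σ τ, P' × Q', _, _, prodRep τ' σ', hσ.prod hτ,
    hτ'.prod hσ', ?_⟩
  -- α ⊕ (σ ⊕ τ) ≅ (β ⊕ σ') ⊕ τ ≅ (β ⊕ τ) ⊕ σ' ≅ (γ ⊕ τ') ⊕ σ' ≅ γ ⊕ (τ' ⊕ σ')
  refine (repIso_prodRep_assoc α σ τ).symm.trans ((e.prod (RepIso.refl τ)).trans ?_)
  refine (repIso_prodRep_assoc β σ' τ).trans
    (((RepIso.refl β).prod (repIso_prodRep_comm σ' τ)).trans ?_)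
  exact (repIso_prodRep_assoc β τ σ').symm.trans
    ((f.prod (RepIso.refl σ')).trans (repIso_prodRep_assoc γ τ' σ'))

lemma SimilarRep.of_inflRep_mk' (K : Subgroup H) [K.Normal] {α : Representation ℤ (H ⧸ K) A}
    {β : Representation ℤ (H ⧸ K) B}
    (h : SimilarRep (inflRep α (QuotientGroup.mk' K)) (inflRep β (QuotientGroup.mk' K))) :
    SimilarRep α β := by
  obtain ⟨Q, _, _, σ, Q', _, _, σ', hσ, hσ', e⟩ := h
  refine ⟨_, _, _, σ.quotientToInvariants K, _, _, _, σ'.quotientToInvariants K,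
    hσ.quotientToInvariants K, hσ'.quotientToInvariants K, ?_⟩
  refine (((repIso_quotientToInvariants_inflRep K α).symm.prod (RepIso.refl _)).trans
    (repIso_quotientToInvariants_prodRep K _ σ).symm).trans ?_
  exact (e.quotientToInvariants K).trans ((repIso_quotientToInvariants_prodRep K _ σ').trans
    ((repIso_quotientToInvariants_inflRep K β).prod (RepIso.refl _)))

lemma SimilarRep.of_inflRep_of_surjective {φ : H →* G} (hφ : Function.Surjective φ)
    (h : SimilarRep (inflRep α φ) (inflRep β φ)) : SimilarRep α β := by
  obtain ⟨K, _, ψ, rfl⟩ : ∃ (K : Subgroup H) (_ : K.Normal) (ψ : H ⧸ K ≃* G),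
      φ = (ψ : H ⧸ K →* G).comp (QuotientGroup.mk' K) :=
    ⟨φ.ker, inferInstance, QuotientGroup.quotientKerEquivOfSurjective φ hφ,
      MonoidHom.ext fun _ => rfl⟩
  have hψ : ∀ {D : Type} [AddCommGroup D] {_ : Module ℤ D} (δ : Representation ℤ G D),
      inflRep (inflRep δ ψ) (ψ.symm : G →* H ⧸ K) = δ := fun δ =>
    MonoidHom.ext fun g => by simp [inflRep]
  have h_quot := SimilarRep.of_inflRep_mk' K (α := inflRep α ψ) (β := inflRep β ψ) h
  simpa only [hψ] using h_quot.infl (ψ.symm : G →* H ⧸ K)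

end Similar

section RelComp

variable {G G' G'' : Type} [Group G] [Group G'] [Group G'']

def Subgroup.relComp (W₁ : Subgroup (G × G')) (W₂ : Subgroup (G' × G'')) :
    Subgroup (G × G'') where
  carrier := {p | ∃ g', (p.1, g') ∈ W₁ ∧ (g', p.2) ∈ W₂}
  one_mem' := ⟨1, W₁.one_mem, W₂.one_mem⟩
  mul_mem' := by
    rintro _ _ ⟨a', ha₁, ha₂⟩ ⟨b', hb₁, hb₂⟩
    exact ⟨a' * b', W₁.mul_mem ha₁ hb₁, W₂.mul_mem ha₂ hb₂⟩
  inv_mem' := by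
    rintro _ ⟨a', ha₁, ha₂⟩
    exact ⟨a'⁻¹, W₁.inv_mem ha₁, W₂.inv_mem ha₂⟩

variable {W₁ : Subgroup (G × G')} {W₂ : Subgroup (G' × G'')}

lemma projFst_relComp_surjective (h₁ : Function.Surjective (projFst W₁))
    (h₂ : Function.Surjective (projFst W₂)) : Function.Surjective (projFst (W₁.relComp W₂)) := by
  intro g
  obtain ⟨⟨⟨_, g'⟩, hw₁⟩, rfl⟩ := h₁ g
  obtain ⟨⟨⟨_, g''⟩, hw₂⟩, rfl⟩ := h₂ g'
  exact ⟨⟨(_, g''), _, hw₁, hw₂⟩, rfl⟩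

lemma projSnd_relComp_surjective (h₁ : Function.Surjective (projSnd W₁))
    (h₂ : Function.Surjective (projSnd W₂)) : Function.Surjective (projSnd (W₁.relComp W₂)) := by
  intro g''
  obtain ⟨⟨⟨g', _⟩, hw₂⟩, rfl⟩ := h₂ g''
  obtain ⟨⟨⟨g, _⟩, hw₁⟩, rfl⟩ := h₁ g'
  exact ⟨⟨(g, _), _, hw₁, hw₂⟩, rfl⟩

variable (W₁ W₂)

def Subgroup.fiberProd : Subgroup (W₁ × W₂) :=
  ((projSnd W₁).comp (MonoidHom.fst _ _)).eqLocus ((projFst W₂).comp (MonoidHom.snd _ _))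

def Subgroup.fiberProdToRelComp : W₁.fiberProd W₂ →* W₁.relComp W₂ :=
  MonoidHom.codRestrict (((projFst W₁).prodMap (projSnd W₂)).comp (W₁.fiberProd W₂).subtype)
    (W₁.relComp W₂) fun w => ⟨(w.1.1 : G × G').2, w.1.1.2, by
      rw [show (w.1.1 : G × G').2 = (w.1.2 : G' × G'').1 from w.2]
      exact w.1.2.2⟩

lemma Subgroup.fiberProdToRelComp_surjective :
    Function.Surjective (W₁.fiberProdToRelComp W₂) := by
  rintro ⟨⟨g, g''⟩, g', hw₁, hw₂⟩
  exact ⟨⟨(⟨(g, g'), hw₁⟩, ⟨(g', g''), hw₂⟩), rfl⟩, rfl⟩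

variable {W₁ W₂} {A B C : Type} [AddCommGroup A] {_ : Module ℤ A} [AddCommGroup B]
  {_ : Module ℤ B} [AddCommGroup C] {_ : Module ℤ C}

lemma SimilarRep.relComp {ρ : Representation ℤ G A} {ρ' : Representation ℤ G' B}
    {ρ'' : Representation ℤ G'' C}
    (h₁ : SimilarRep (inflRep ρ (projFst W₁)) (inflRep ρ' (projSnd W₁)))
    (h₂ : SimilarRep (inflRep ρ' (projFst W₂)) (inflRep ρ'' (projSnd W₂))) :
    SimilarRep (inflRep ρ (projFst (W₁.relComp W₂))) (inflRep ρ'' (projSnd (W₁.relComp W₂))) := by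
  let p₁ : W₁.fiberProd W₂ →* W₁ := (MonoidHom.fst _ _).comp (W₁.fiberProd W₂).subtype
  let p₂ : W₁.fiberProd W₂ →* W₂ := (MonoidHom.snd _ _).comp (W₁.fiberProd W₂).subtype
  have hmid : (projSnd W₁).comp p₁ = (projFst W₂).comp p₂ := MonoidHom.ext fun w => w.2
  have h₁' : SimilarRep (inflRep ρ ((projFst W₁).comp p₁))
      (inflRep ρ' ((projFst W₂).comp p₂)) := hmid ▸ h₁.infl p₁
  exact SimilarRep.of_inflRep_of_surjective (W₁.fiberProdToRelComp_surjective W₂)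
    (h₁'.trans (h₂.infl p₂))

end RelComp

theorem weak_stably_equivalent_trans_general
    {G G' G'' : Type} [Group G] [Group G'] [Group G'']
    {F F' F'' : Type}
    [AddCommGroup F] [Module ℤ F]
    [AddCommGroup F'] [Module ℤ F']
    [AddCommGroup F''] [Module ℤ F'']
    (ρF : Representation ℤ G F)
    (ρF' : Representation ℤ G' F')
    (ρF'' : Representation ℤ G'' F'')
    (W₁ : Subgroup (G × G'))
    (hW₁ : Function.Surjective (projFst W₁)) (hW₁' : Function.Surjective (projSnd W₁))
    (hsim₁ : SimilarRep (inflRep ρF (projFst W₁)) (inflRep ρF' (projSnd W₁)))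
    (W₂ : Subgroup (G' × G''))
    (hW₂ : Function.Surjective (projFst W₂)) (hW₂' : Function.Surjective (projSnd W₂))
    (hsim₂ : SimilarRep (inflRep ρF' (projFst W₂)) (inflRep ρF'' (projSnd W₂))) :
    ∃ W₃ : Subgroup (G × G''),
      Function.Surjective (projFst W₃) ∧ Function.Surjective (projSnd W₃) ∧
      SimilarRep (inflRep ρF (projFst W₃)) (inflRep ρF'' (projSnd W₃)) :=
  ⟨W₁.relComp W₂, projFst_relComp_surjective hW₁ hW₂, projSnd_relComp_surjective hW₁' hW₂',
    hsim₁.relComp hsim₂⟩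

/-- Weak stable equivalence of flabby classes is transitive: if the flabby
quotients `F` of `M` (a `G`-lattice) and `F'` of `M'` (a `G'`-lattice) become similar over
some subdirect product `W₁ ≤ G × G'`, and `F'` and `F''` (flabby quotient of the
`G''`-lattice `M''`) become similar over some subdirect product `W₂ ≤ G' × G''`, then `F`
and `F''` become similar over some subdirect product `W₃ ≤ G × G''`. -/
theorem weak_stably_equivalent_trans
    {G G' G'' : Type} [Group G] [Group G'] [Group G''] [Finite G] [Finite G'] [Finite G'']
    {M F M' F' M'' F'' : Type}
    [AddCommGroup M] [Module ℤ M] [Module.Free ℤ M] [Module.Finite ℤ M]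
    [AddCommGroup F] [Module ℤ F] [Module.Free ℤ F] [Module.Finite ℤ F]
    [AddCommGroup M'] [Module ℤ M'] [Module.Free ℤ M'] [Module.Finite ℤ M']
    [AddCommGroup F'] [Module ℤ F'] [Module.Free ℤ F'] [Module.Finite ℤ F']
    [AddCommGroup M''] [Module ℤ M''] [Module.Free ℤ M''] [Module.Finite ℤ M'']
    [AddCommGroup F''] [Module ℤ F''] [Module.Free ℤ F''] [Module.Finite ℤ F'']
    (ρM : Representation ℤ G M) (ρF : Representation ℤ G F)
    (ρM' : Representation ℤ G' M') (ρF' : Representation ℤ G' F')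
    (ρM'' : Representation ℤ G'' M'') (ρF'' : Representation ℤ G'' F'')
    (hq : IsFlabbyQuotient ρM ρF) (hq' : IsFlabbyQuotient ρM' ρF')
    (hq'' : IsFlabbyQuotient ρM'' ρF'')
    (W₁ : Subgroup (G × G'))
    (hW₁ : Function.Surjective (projFst W₁)) (hW₁' : Function.Surjective (projSnd W₁))
    (hsim₁ : SimilarRep (inflRep ρF (projFst W₁)) (inflRep ρF' (projSnd W₁)))
    (W₂ : Subgroup (G' × G''))
    (hW₂ : Function.Surjective (projFst W₂)) (hW₂' : Function.Surjective (projSnd W₂))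
    (hsim₂ : SimilarRep (inflRep ρF' (projFst W₂)) (inflRep ρF'' (projSnd W₂))) :
    ∃ W₃ : Subgroup (G × G''),
      Function.Surjective (projFst W₃) ∧ Function.Surjective (projSnd W₃) ∧
      SimilarRep (inflRep ρF (projFst W₃)) (inflRep ρF'' (projSnd W₃)) :=
  weak_stably_equivalent_trans_general ρF ρF' ρF'' W₁ hW₁ hW₁' hsim₁ W₂ hW₂ hW₂' hsim₂
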